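/- Let D = {z ∈ ℂ : |z| < 1} be the open unit disk, let φ, ψ : D → ℝ be harmonic functions on D, and let F : D → D be a bijective C¹ map with det((DF)_z) > 0 for all z ∈ D, satisfying e^{ψ(F(z))}‖(DF)_z(v)‖ = e^{φ(z)}‖v‖ for all z ∈ D and all v ∈ ℂ (i.e., F is an orientation-preserving isometry between the harmonic disks (D, e^{2φ}g₀) and (D, e^{2ψ}g₀)). Then F is a Möbius automorphism of D: there exist a ∈ ℂ with |a| < 1 and θ ∈ [0, 2π) such that F(z) = e^{iθ}·(z − a)/(conj(a)·z − 1) for all z ∈ D. -/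

import Mathlib

open Complex Metric Set Filter Topology

set_option maxHeartbeats 1000000

lemma det_formula (L : ℂ →L[ℝ] ℂ) :
    L.det = (L 1).re * (L I).im - (L I).re * (L 1).im := by
  rw [ContinuousLinearMap.det, ← LinearMap.det_toMatrix basisOneI, Matrix.det_fin_two]
  simp [LinearMap.toMatrix_apply, Complex.coe_basisOneI_repr, Complex.coe_basisOneI]

lemma conformal_mul (L : ℂ →L[ℝ] ℂ) (k : ℝ) (hk : 0 < k)
    (hn : ∀ v : ℂ, ‖L v‖ = k * ‖v‖) (hdet : 0 < L.det) :
    ∀ v : ℂ, L v = v * L 1 := by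
  have hsq : ∀ v : ℂ, Complex.normSq (L v) = k ^ 2 * Complex.normSq v := by
    intro v
    rw [← Complex.sq_norm, ← Complex.sq_norm,
      hn v]
    ring
  have e1 := hsq 1
  have e2 := hsq I
  have e3 := hsq (1 + I)
  rw [map_add] at e3
  simp only [Complex.normSq_apply, Complex.add_re, Complex.add_im, Complex.one_re,
    Complex.one_im, Complex.I_re, Complex.I_im] at e1 e2 e3
  rw [det_formula] at hdet
  set cr := (L 1).re with hcr
  set ci := (L 1).im with hci
  set dr := (L I).re with hdr
  set di := (L I).im with hdi
  norm_num at e1 e2 e3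
  have hdot : cr * dr + ci * di = 0 := by linarith
  have key : (cr * di - dr * ci) ^ 2 + (cr * dr + ci * di) ^ 2
      = (cr * cr + ci * ci) * (dr * dr + di * di) := by ring
  rw [hdot, e1, e2] at key
  have hdet2 : cr * di - dr * ci = k ^ 2 := by
    rcases mul_eq_zero.1 (show (cr * di - dr * ci - k ^ 2) * (cr * di - dr * ci + k ^ 2) = 0 by
      nlinarith [key]) with h | h
    · linarith
    · nlinarith [hk, sq_nonneg k]
  have h4 : (dr + ci) ^ 2 + (di - cr) ^ 2 = 0 := by nlinarith [e1, e2, hdet2]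
  have h5 : dr = -ci := by nlinarith [sq_nonneg (dr + ci), sq_nonneg (di - cr)]
  have h6 : di = cr := by nlinarith [sq_nonneg (dr + ci), sq_nonneg (di - cr)]
  have hd : L I = I * L 1 := by
    apply Complex.ext <;> simp [Complex.mul_re, Complex.mul_im, ← hdr, ← hdi, ← hcr, ← hci, h5, h6]
  intro v
  have hv : v = v.re • (1 : ℂ) + v.im • I := by apply Complex.ext <;> simp
  rw [hv, map_add, map_smul, map_smul, hd]
  simp only [Complex.real_smul]
  ring

noncomputable def mob (a z : ℂ) : ℂ := (z - a) / ((starRingEnd ℂ) a * z - 1)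

lemma mob_den_ne {a z : ℂ} (ha : ‖a‖ < 1) (hz : ‖z‖ < 1) :
    (starRingEnd ℂ) a * z - 1 ≠ 0 := by
  intro h
  have h1 : (starRingEnd ℂ) a * z = 1 := by linear_combination h
  have h2 : ‖a‖ * ‖z‖ = 1 := by
    have := congrArg (‖·‖) h1
    simpa [norm_mul] using this
  nlinarith [norm_nonneg a, norm_nonneg z]

lemma mob_normSq_key (a z : ℂ) :
    Complex.normSq ((starRingEnd ℂ) a * z - 1) - Complex.normSq (z - a)
      = (1 - Complex.normSq a) * (1 - Complex.normSq z) := by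
  simp only [Complex.normSq_apply, Complex.sub_re, Complex.sub_im, Complex.mul_re,
    Complex.mul_im, Complex.conj_re, Complex.conj_im, Complex.one_re, Complex.one_im]
  ring

lemma mob_maps {a z : ℂ} (ha : ‖a‖ < 1) (hz : ‖z‖ < 1) :
    ‖mob a z‖ < 1 := by
  have hden := mob_den_ne ha hz
  have hpos : 0 < ‖(starRingEnd ℂ) a * z - 1‖ := norm_pos_iff.2 hden
  have hna : Complex.normSq a < 1 := by
    rw [← Complex.sq_norm]; nlinarith [norm_nonneg a]
  have hnz : Complex.normSq z < 1 := by
    rw [← Complex.sq_norm]; nlinarith [norm_nonneg z]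
  have hlt : Complex.normSq (z - a) < Complex.normSq ((starRingEnd ℂ) a * z - 1) := by
    nlinarith [mob_normSq_key a z]
  rw [mob, norm_div, div_lt_one hpos]
  rw [← Complex.sq_norm, ← Complex.sq_norm] at hlt
  nlinarith [norm_nonneg (z - a), norm_nonneg ((starRingEnd ℂ) a * z - 1)]

lemma mob_invol {a z : ℂ} (ha : ‖a‖ < 1) (hz : ‖z‖ < 1) :
    mob a (mob a z) = z := by
  have hd1 : (starRingEnd ℂ) a * z - 1 ≠ 0 := mob_den_ne ha hz
  have hne : (1 : ℂ) - (starRingEnd ℂ) a * a ≠ 0 := by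
    intro h
    have : (starRingEnd ℂ) a * a = 1 := by linear_combination -h
    have h2 : ‖a‖ * ‖a‖ = 1 := by
      have := congrArg (‖·‖) this
      simpa [norm_mul] using this
    nlinarith [norm_nonneg a]
  have h2 : (starRingEnd ℂ) a * (mob a z) - 1
      = ((1 : ℂ) - (starRingEnd ℂ) a * a) / ((starRingEnd ℂ) a * z - 1) := by
    rw [mob]; field_simp; ring
  have h3 : mob a z - a = (z * (1 - (starRingEnd ℂ) a * a)) / ((starRingEnd ℂ) a * z - 1) := by
    rw [mob]; rw [eq_div_iff hd1, sub_mul, div_mul_cancel₀ _ hd1]; ring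
  rw [mob, h2, h3]
  rw [mul_div_assoc]
  exact mul_div_cancel_right₀ z (div_ne_zero hne hd1)

lemma mob_self (a : ℂ) (ha : ‖a‖ < 1) : mob a a = 0 := by
  simp [mob]

lemma mob_zero {a : ℂ} (ha : ‖a‖ < 1) : mob a 0 = a := by
  have : ‖(0 : ℂ)‖ < 1 := by simp
  simp [mob, neg_div, div_neg]

lemma mob_diffOn {a : ℂ} (ha : ‖a‖ < 1) :
    DifferentiableOn ℂ (mob a) (ball (0 : ℂ) 1) := by
  apply DifferentiableOn.div
  · exact (differentiable_id.sub_const a).differentiableOn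
  · exact ((differentiable_id.const_mul _).sub_const 1).differentiableOn
  · exact fun z hz => mob_den_ne ha (mem_ball_zero_iff.1 hz)

/-- The Laplacian of `φ : ℂ → ℝ`, identifying ℂ with ℝ². -/
noncomputable def lap (φ : ℂ → ℝ) (z : ℂ) : ℝ :=
  fderiv ℝ (fun w => fderiv ℝ φ w 1) z 1 +
    fderiv ℝ (fun w => fderiv ℝ φ w Complex.I) z Complex.I

/-- `φ` is harmonic on an open set `Ω ⊆ ℂ`: smooth on `Ω` with vanishing Laplacian on `Ω`. -/
def IsHarmonicOn (φ : ℂ → ℝ) (Ω : Set ℂ) : Prop :=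
  ContDiffOn ℝ (⊤ : ℕ∞) φ Ω ∧ ∀ z ∈ Ω, lap φ z = 0

/-- Every orientation-preserving C¹ isometry between harmonic disks is a Möbius
automorphism `z ↦ e^{iθ}(z − a)/(ā·z − 1)` of the unit disk. -/
theorem isometry_harmonic_disks_mobius (φ ψ : ℂ → ℝ)
    (D : Set ℂ) (hD : D = Metric.ball (0 : ℂ) 1)
    (hφ : IsHarmonicOn φ D) (hψ : IsHarmonicOn ψ D)
    (F : ℂ → ℂ) (hF : ContDiffOn ℝ 1 F D) (hbij : Set.BijOn F D D)
    (hor : ∀ z ∈ D, 0 < (fderiv ℝ F z).det)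
    (hiso : ∀ z ∈ D, ∀ v : ℂ,
      Real.exp (ψ (F z)) * ‖fderiv ℝ F z v‖ = Real.exp (φ z) * ‖v‖) :
    ∃ a : ℂ, ∃ θ : ℝ, ‖a‖ < 1 ∧ θ ∈ Set.Ico 0 (2 * Real.pi) ∧
      ∀ z ∈ D, F z = Complex.exp (θ * Complex.I) *
        ((z - a) / ((starRingEnd ℂ) a * z - 1)) := by
  subst hD
  clear hφ hψ
  have hOpen : IsOpen (Metric.ball (0 : ℂ) 1) := isOpen_ball
  set c : ℂ → ℂ := fun z => fderiv ℝ F z 1 with hcDef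
  have hk : ∀ z ∈ Metric.ball (0 : ℂ) 1, ∀ v : ℂ,
      ‖fderiv ℝ F z v‖ = Real.exp (φ z - ψ (F z)) * ‖v‖ := by
    intro z hz v
    rw [Real.exp_sub, div_mul_eq_mul_div, eq_div_iff (Real.exp_pos (ψ (F z))).ne']
    linarith [hiso z hz v]
  have hmul : ∀ z ∈ Metric.ball (0 : ℂ) 1, ∀ v : ℂ, fderiv ℝ F z v = v * c z := by
    intro z hz
    exact conformal_mul (fderiv ℝ F z) _ (Real.exp_pos _) (hk z hz) (hor z hz)
  have hcne : ∀ z ∈ Metric.ball (0 : ℂ) 1, c z ≠ 0 := by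
    intro z hz h
    have h1 := hk z hz 1
    rw [show fderiv ℝ F z 1 = c z from rfl, h] at h1
    simp only [norm_zero, norm_one, mul_one] at h1
    exact (Real.exp_pos _).ne h1
  have hstrictF : ∀ z ∈ Metric.ball (0 : ℂ) 1, HasStrictDerivAt F (c z) z := by
    intro z hz
    have hCD : ContDiffAt ℝ 1 F z := hF.contDiffAt (hOpen.mem_nhds hz)
    have h1 : HasStrictFDerivAt F (fderiv ℝ F z) z := hCD.hasStrictFDerivAt one_ne_zero
    refine HasStrictFDerivAt.of_isLittleO ?_
    have h2 := h1.isLittleO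
    simp only [hmul z hz] at h2
    simpa only [ContinuousLinearMap.smulRight_apply, ContinuousLinearMap.one_apply,
      ContinuousLinearMap.toSpanSingleton_apply, smul_eq_mul] using h2
  have hdiffF : DifferentiableOn ℂ F (Metric.ball (0 : ℂ) 1) := fun z hz =>
    ((hstrictF z hz).hasDerivAt).differentiableAt.differentiableWithinAt
  -- inverse map
  set G := Function.invFunOn F (Metric.ball (0 : ℂ) 1) with hGDef
  have hInv : Set.InvOn G F (Metric.ball (0 : ℂ) 1) (Metric.ball (0 : ℂ) 1) :=
    hbij.invOn_invFunOn
  have hGmaps : Set.MapsTo G (Metric.ball (0 : ℂ) 1) (Metric.ball (0 : ℂ) 1) := by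
    intro w hw
    obtain ⟨z, hz, rfl⟩ := hbij.surjOn hw
    rwa [hInv.1 hz]
  have hstrictG : ∀ w ∈ Metric.ball (0 : ℂ) 1, HasStrictDerivAt G (c (G w))⁻¹ w := by
    intro w hw
    have hz : G w ∈ Metric.ball (0 : ℂ) 1 := hGmaps hw
    have hFz : F (G w) = w := hInv.2 hw
    have hev : ∀ᶠ x in 𝓝 (G w), G (F x) = x := by
      filter_upwards [hOpen.mem_nhds hz] with x hx using hInv.1 hx
    have := (hstrictF _ hz).to_local_left_inverse (hcne _ hz) hev
    rwa [hFz] at this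
  have hdiffG : DifferentiableOn ℂ G (Metric.ball (0 : ℂ) 1) := fun w hw =>
    ((hstrictG w hw).hasDerivAt).differentiableAt.differentiableWithinAt
  have h0mem : (0 : ℂ) ∈ Metric.ball (0 : ℂ) 1 := mem_ball_self one_pos
  set a := G 0 with haDef
  have haMem : a ∈ Metric.ball (0 : ℂ) 1 := hGmaps h0mem
  have haAbs : ‖a‖ < 1 := mem_ball_zero_iff.1 haMem
  have hFa : F a = 0 := hInv.2 h0mem
  set h := fun w => F (mob a w) with hhDef
  set q := fun w => mob a (G w) with hqDef
  have hmobMaps : Set.MapsTo (mob a) (Metric.ball (0 : ℂ) 1) (Metric.ball (0 : ℂ) 1) :=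
    fun z hz => mem_ball_zero_iff.2 (mob_maps haAbs (mem_ball_zero_iff.1 hz))
  have hdiffh : DifferentiableOn ℂ h (Metric.ball (0 : ℂ) 1) :=
    hdiffF.comp (mob_diffOn haAbs) hmobMaps
  have hhmaps : Set.MapsTo h (Metric.ball (0 : ℂ) 1) (Metric.ball (0 : ℂ) 1) :=
    hbij.mapsTo.comp hmobMaps
  have hh0 : h 0 = 0 := by
    show F (mob a 0) = 0
    rw [mob_zero haAbs, hFa]
  have hdiffq : DifferentiableOn ℂ q (Metric.ball (0 : ℂ) 1) :=
    (mob_diffOn haAbs).comp hdiffG hGmaps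
  have hqmaps : Set.MapsTo q (Metric.ball (0 : ℂ) 1) (Metric.ball (0 : ℂ) 1) :=
    hmobMaps.comp hGmaps
  have hq0 : q 0 = 0 := by
    show mob a (G 0) = 0
    rw [← haDef, mob_self a haAbs]
  have hqh : ∀ w ∈ Metric.ball (0 : ℂ) 1, q (h w) = w := by
    intro w hw
    have h1 : mob a w ∈ Metric.ball (0 : ℂ) 1 := hmobMaps hw
    show mob a (G (F (mob a w))) = w
    rw [hInv.1 h1, mob_invol haAbs (mem_ball_zero_iff.1 hw)]
  have habs_eq : ∀ w ∈ Metric.ball (0 : ℂ) 1, ‖h w‖ = ‖w‖ := by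
    intro w hw
    have hle : ‖h w‖ ≤ ‖w‖ :=
      Complex.norm_le_norm_of_mapsTo_ball hdiffh (hhmaps.mono_right ball_subset_closedBall) hh0 (mem_ball_zero_iff.1 hw)
    have hge : ‖w‖ ≤ ‖h w‖ := by
      have h2 := Complex.norm_le_norm_of_mapsTo_ball hdiffq (hqmaps.mono_right ball_subset_closedBall) hq0
        (mem_ball_zero_iff.1 (hhmaps hw))
      rwa [hqh w hw] at h2
    exact le_antisymm hle hge
  have hz₀ : (1/2 : ℂ) ∈ Metric.ball (0 : ℂ) 1 := by
    rw [mem_ball_zero_iff]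
    norm_num
  have hz₀abs : ‖(1/2 : ℂ)‖ = 1/2 := by norm_num
  have hds : ‖dslope h 0 (1/2 : ℂ)‖ = 1 / 1 := by
    rw [dslope_of_ne _ (by norm_num : (1/2 : ℂ) ≠ 0), slope_def_field, hh0, sub_zero, sub_zero,
      norm_div, habs_eq _ hz₀, hz₀abs]
    norm_num
  have hmapsTo' : Set.MapsTo h (Metric.ball (0 : ℂ) 1) (Metric.ball (h 0) 1) := by rwa [hh0]
  have h_affine := Complex.affine_of_mapsTo_ball_of_norm_dslope_eq_div
    hdiffh (hmapsTo'.mono_right ball_subset_closedBall) hz₀ hds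
  set C := dslope h 0 (1/2 : ℂ) with hCDef
  have hCabs : ‖C‖ = 1 := by
    have := hds
    rwa [div_one] at this
  have hFeq : ∀ w ∈ Metric.ball (0 : ℂ) 1, F w = C * mob a w := by
    intro w hw
    have h1 : mob a w ∈ Metric.ball (0 : ℂ) 1 := hmobMaps hw
    have h2 := h_affine h1
    have h3 : F w = h (mob a w) := by
      show F w = F (mob a (mob a w))
      rw [mob_invol haAbs (mem_ball_zero_iff.1 hw)]
    rw [h3, h2, hh0]
    simp [smul_eq_mul, mul_comm]
  have hCexp : Complex.exp (Complex.arg C * Complex.I) = C := by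
    conv_rhs => rw [← Complex.norm_mul_exp_arg_mul_I C]
    rw [hCabs, Complex.ofReal_one, one_mul]
  have hpi : 0 < Real.pi := Real.pi_pos
  rcases le_or_gt 0 (Complex.arg C) with hpos | hneg
  · refine ⟨a, Complex.arg C, haAbs, ⟨hpos, ?_⟩, ?_⟩
    · calc Complex.arg C ≤ Real.pi := Complex.arg_le_pi C
        _ < 2 * Real.pi := by linarith
    · intro z hz
      rw [hFeq z hz, hCexp]
      rfl
  · refine ⟨a, Complex.arg C + 2 * Real.pi, haAbs, ⟨?_, ?_⟩, ?_⟩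
    · linarith [Complex.neg_pi_lt_arg C]
    · linarith
    · intro z hz
      rw [hFeq z hz]
      have : Complex.exp ((↑(Complex.arg C + 2 * Real.pi) : ℂ) * Complex.I) = C := by
        rw [Complex.ofReal_add, add_mul, Complex.exp_add]
        push_cast
        rw [Complex.exp_two_pi_mul_I, mul_one, hCexp]
      rw [this]
      rfl
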